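/- arXiv:0803.0804 — 6 statements merged into one kernel-verified Lean document; each statement's English description precedes it below -/
import Mathlib

section
/- Let $k \ge 1$. For every even natural number $m \ge 2$ there exists a normal subgroup $H$ of $G_k$ with Subgroup.index $H = m$. That is, $G_k$ has a normal subgroup of arbitrary even index. -/
open scoped BigOperators

noncomputable section

/-- The group representation `G_k` of the Cayley tree of order `k`:
the free product of `k+1` copies of the cyclic group of order two. -/
abbrev G (k : ℕ) : Type := Monoid.CoprodI (fun _ : Fin (k + 1) => Multiplicative (ZMod 2))

/-- The generators `a_0, ..., a_k` of `G_k`. -/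
def gen (k : ℕ) (s : Fin (k + 1)) : G k :=
  Monoid.CoprodI.of (i := s) (Multiplicative.ofAdd (1 : ZMod 2))

/-- `φ_p(t) = |t|^(p-2) t` (real powers). -/
noncomputable def phiP (p t : ℝ) : ℝ := |t| ^ (p - 2) * t

/-- The discrete `p`-Laplacian on the Cayley tree with resistances `r`:
`Δ_p u (x) = ∑_{s=0}^{k} φ_p ((u (x a_s) - u x) / r (x, x a_s))`. -/
noncomputable def pLap (k : ℕ) (p : ℝ) (r : G k × G k → ℝ) (u : G k → ℝ) (x : G k) : ℝ :=
  ∑ s : Fin (k + 1), phiP p ((u (x * gen k s) - u x) / r (x, x * gen k s))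

/-- A function `u : G_k → ℝ` is `H`-periodic if `u (y x) = u x` for all `y ∈ H`, `x ∈ G_k`. -/
def IsPeriodic (k : ℕ) (H : Subgroup (G k)) (u : G k → ℝ) : Prop :=
  ∀ y ∈ H, ∀ x : G k, u (y * x) = u x

/-- The coset index `φ(x) = ρ(x)(0)` associated to a permutation action `ρ` of `G_k` on `ℤ`. -/
def cosetIdx {k : ℕ} (ρ : G k →* Equiv.Perm ℤ) (x : G k) : ℤ := ρ x 0

/-! The map `a_0 ↦ sr 0`, `a_s ↦ sr 1` (`s ≥ 1`) sends `G_k` onto the dihedral group of order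
`2n`, since the reflections `sr 0` and `sr 1` generate it; its kernel has index `2n`. -/

def involutionHom {M : Type*} [Monoid M] (g : M) (hg : g * g = 1) :
    Multiplicative (ZMod 2) →* M where
  toFun x := if x.toAdd = 0 then 1 else g
  map_one' := by simp
  map_mul' x y := by
    fin_cases x <;> fin_cases y <;> simp +decide [hg]

@[simp]
theorem involutionHom_ofAdd_one {M : Type*} [Monoid M] (g : M) (hg : g * g = 1) :
    involutionHom g hg (Multiplicative.ofAdd 1) = g := by
  simp +decide [involutionHom]

namespace DihedralGroup

variable {n : ℕ}

theorem closure_sr_zero_sr_one :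
    Subgroup.closure {(sr 0 : DihedralGroup n), sr 1} = ⊤ := by
  set S := Subgroup.closure {(sr 0 : DihedralGroup n), sr 1}
  have hsr0 : (sr 0 : DihedralGroup n) ∈ S := Subgroup.subset_closure (by simp)
  have hsr1 : (sr 1 : DihedralGroup n) ∈ S := Subgroup.subset_closure (by simp)
  have hr1 : (r 1 : DihedralGroup n) ∈ S := by simpa [sr_mul_sr] using S.mul_mem hsr0 hsr1
  have hr : ∀ i : ZMod n, r i ∈ S := fun i => by
    simpa [r_one_zpow, ZMod.intCast_zmod_cast] using S.zpow_mem hr1 (ZMod.cast i : ℤ)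
  rw [eq_top_iff]
  rintro (i | i) -
  · exact hr i
  · simpa [sr_mul_r] using S.mul_mem hsr0 (hr i)

theorem range_eq_top_of_sr_mem {H : Type*} [Group H] (f : H →* DihedralGroup n)
    (h0 : sr 0 ∈ f.range) (h1 : sr 1 ∈ f.range) : f.range = ⊤ := by
  rw [eq_top_iff, ← closure_sr_zero_sr_one, Subgroup.closure_le]
  rintro _ (rfl | rfl)
  exacts [h0, h1]

end DihedralGroup

def dihedralHom (k n : ℕ) : G k →* DihedralGroup n :=
  Monoid.CoprodI.lift fun s =>
    involutionHom (DihedralGroup.sr (if s = 0 then 0 else 1)) (DihedralGroup.sr_mul_self _)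

theorem dihedralHom_gen (k n : ℕ) (s : Fin (k + 1)) :
    dihedralHom k n (gen k s) = DihedralGroup.sr (if s = 0 then 0 else 1) := by
  simp [dihedralHom, gen]

theorem dihedralHom_range_eq_top (k n : ℕ) (hk : 1 ≤ k) : (dihedralHom k n).range = ⊤ := by
  have h10 : (1 : Fin (k + 1)) ≠ 0 := by
    simp [Fin.ext_iff, Nat.mod_eq_of_lt (by omega : 1 < k + 1)]
  apply DihedralGroup.range_eq_top_of_sr_mem
  · exact ⟨gen k 0, by simp [dihedralHom_gen]⟩
  · exact ⟨gen k 1, by simp [dihedralHom_gen, h10]⟩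

theorem index_ker_dihedralHom (k n : ℕ) (hk : 1 ≤ k) : (dihedralHom k n).ker.index = 2 * n := by
  rw [Subgroup.index_ker, dihedralHom_range_eq_top k n hk, Subgroup.card_top, DihedralGroup.nat_card]

theorem stmt1_general (k : ℕ) (hk : 1 ≤ k) (m : ℕ) (heven : Even m) :
    ∃ H : Subgroup (G k), H.Normal ∧ H.index = m := by
  obtain ⟨n, rfl⟩ := heven
  exact ⟨(dihedralHom k n).ker, MonoidHom.normal_ker _, by rw [index_ker_dihedralHom k n hk, two_mul]⟩

theorem stmt1 (k : ℕ) (hk : 1 ≤ k) (m : ℕ) (hm2 : 2 ≤ m) (heven : Even m) :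
    ∃ H : Subgroup (G k), H.Normal ∧ H.index = m :=
  stmt1_general k hk m heven
end
end

section
/- Let $H$ be a normal subgroup of $G_k$ of finite index (Subgroup.index $H \ne 0$), let $1 < p < \infty$, and let $r : G_k \times G_k \to \mathbb{R}$ satisfy $r(x,y) = r(y,x) > 0$ for all $x,y$. If $u : G_k \to \mathbb{R}$ is $H$-periodic and $p$-harmonic (i.e. $\Delta_p u(x) = 0$ for all $x \in G_k$), then $u$ is constant: $u(x) = u(y)$ for all $x, y \in G_k$. -/
open scoped BigOperators

noncomputable section

/-! Invariance under left translation by a finite-index subgroup makes `u` constant on each of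
the finitely many right cosets, so `u` attains a maximum. At a maximum every term of `Δ_p u` is
`≤ 0` and `φ_p` vanishes only at `0`, so the maximum is also attained at every neighbour `x a_s`;
as the `a_s` generate `G_k`, it is attained everywhere. -/

lemma phiP_nonpos {p t : ℝ} (ht : t ≤ 0) : phiP p t ≤ 0 :=
  mul_nonpos_of_nonneg_of_nonpos (Real.rpow_nonneg (abs_nonneg t) _) ht

lemma eq_zero_of_phiP_eq_zero {p t : ℝ} (h : phiP p t = 0) : t = 0 := by
  by_contra ht
  exact mul_ne_zero (Real.rpow_pos_of_pos (abs_pos.mpr ht) _).ne' ht h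

lemma apply_mul_gen_eq_of_forall_le {k : ℕ} {p : ℝ} {r : G k × G k → ℝ} {u : G k → ℝ} {x : G k}
    (hr : ∀ s, 0 < r (x, x * gen k s)) (hmax : ∀ y, u y ≤ u x) (harm : pLap k p r u x = 0)
    (s : Fin (k + 1)) : u (x * gen k s) = u x := by
  have hterm : ∀ t ∈ Finset.univ, phiP p ((u (x * gen k t) - u x) / r (x, x * gen k t)) ≤ 0 :=
    fun t _ => phiP_nonpos <| div_nonpos_of_nonpos_of_nonneg
      (sub_nonpos.mpr (hmax _)) (hr t).le
  have hs := (Finset.sum_eq_zero_iff_of_nonpos hterm).mp harm s (Finset.mem_univ s)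
  have hdiff := eq_zero_of_phiP_eq_zero hs
  rwa [div_eq_zero_iff, or_iff_left (hr s).ne', sub_eq_zero] at hdiff

lemma forall_mul_of_forall_mul_gen {k : ℕ} {P : G k → Prop}
    (hP : ∀ x s, P x → P (x * gen k s)) {x : G k} (hx : P x) (g : G k) : P (x * g) := by
  induction g using Monoid.CoprodI.induction_on generalizing x with
  | one => simpa using hx
  | of s m =>
    obtain rfl | rfl : m = 1 ∨ m = Multiplicative.ofAdd 1 := by revert m; decide
    · simpa using hx
    · exact hP x s hx
  | mul a b ha hb => simpa only [mul_assoc] using hb (ha hx)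

lemma exists_forall_le_of_forall_mul_left_eq {Γ α : Type*} [Group Γ] [LinearOrder α]
    {H : Subgroup Γ} (hH : H.index ≠ 0) {u : Γ → α} (hu : ∀ y ∈ H, ∀ x, u (y * x) = u x) :
    ∃ x₀, ∀ x, u x ≤ u x₀ := by
  have : Finite (Quotient (QuotientGroup.rightRel H)) :=
    have : Finite (Γ ⧸ H) := Nat.finite_of_card_ne_zero hH
    .of_equiv _ (QuotientGroup.quotientRightRelEquivQuotientLeftRel H).symm
  let v : Quotient (QuotientGroup.rightRel H) → α := Quotient.lift u fun a b hab => by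
    simpa using (hu _ (QuotientGroup.rightRel_apply.mp hab) a).symm
  have : Nonempty (Quotient (QuotientGroup.rightRel H)) := ⟨⟦1⟧⟩
  obtain ⟨q, hq⟩ := Finite.exists_max v
  induction q using Quotient.ind with
  | _ x₀ => exact ⟨x₀, fun x => hq ⟦x⟧⟩

theorem stmt4_general (k : ℕ) (p : ℝ)
    (r : G k × G k → ℝ) (hr_pos : ∀ x y : G k, 0 < r (x, y))
    (H : Subgroup (G k)) (hHfin : H.index ≠ 0)
    (u : G k → ℝ) (hu_per : IsPeriodic k H u)
    (hu_harm : ∀ x : G k, pLap k p r u x = 0) :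
    ∀ x y : G k, u x = u y := by
  obtain ⟨x₀, hx₀⟩ := exists_forall_le_of_forall_mul_left_eq hHfin hu_per
  have hconst : ∀ g, u (x₀ * g) = u x₀ :=
    forall_mul_of_forall_mul_gen (P := fun x => u x = u x₀)
      (fun x s hx => (apply_mul_gen_eq_of_forall_le (fun _ => hr_pos _ _) (hx ▸ hx₀)
        (hu_harm x) s).trans hx) rfl
  intro x y
  rw [← mul_inv_cancel_left x₀ x, ← mul_inv_cancel_left x₀ y, hconst, hconst]

theorem stmt4 (k : ℕ) (hk : 1 ≤ k) (p : ℝ) (hp1 : 1 < p)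
    (r : G k × G k → ℝ) (hr_symm : ∀ x y : G k, r (x, y) = r (y, x)) (hr_pos : ∀ x y : G k, 0 < r (x, y))
    (H : Subgroup (G k)) (hH : H.Normal) (hHfin : H.index ≠ 0)
    (u : G k → ℝ) (hu_per : IsPeriodic k H u)
    (hu_harm : ∀ x : G k, pLap k p r u x = 0) :
    ∀ x y : G k, u x = u y :=
  stmt4_general k p r hr_pos H hHfin u hu_per hu_harm
end
end

section
/- The coset index map $\phi : G_k \to \mathbb{Z}$ is surjective, and for all $x, y \in G_k$ one has $\phi(x) = \phi(y)$ if and only if $x^{-1} y \in H_{ij}$. In particular $\phi^{-1}(0) = H_{ij}$, so $\phi$ induces a bijection between the coset space $G_k / H_{ij}$ and $\mathbb{Z}$: the factor group can be written as $G_k | H_{ij} = \{\dots, H_{-1}, H_0, H_1, \dots\}$ with $H_n = \phi^{-1}(n)$. -/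
open scoped BigOperators

noncomputable section

/-! Let `w c := (a_i a_j)^(c / 2) a_i^(c % 2)`. Then `φ (w c) = c`, and `f x = w (φ x)`: both
`x ↦ f x * w c` and `x ↦ w (ρ x c)` turn left multiplication by `a_i`, `a_j`, `a_s` into
`c ↦ 1 - c`, `c ↦ -1 - c`, `c ↦ c`, since `a_i w c = w (1 - c)` and `a_j w c = w (-1 - c)`.
So `φ x = φ y ↔ f x = f y ↔ x⁻¹ y ∈ ker f`. -/

section DihedralWord

variable {Γ : Type*} [Group Γ] (a b : Γ)

/-- With `a`, `b` acting on `ℤ` as the reflections `n ↦ 1 - n` and `n ↦ -1 - n`, this word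
moves `0` to `c`: `a * b` is the translation by `2`. -/
def dihedralWord (c : ℤ) : Γ := (a * b) ^ (c / 2) * a ^ (c % 2)

@[simp]
theorem dihedralWord_zero : dihedralWord a b 0 = 1 := by
  simp [dihedralWord]

theorem zpow_mul_dihedralWord (n c : ℤ) :
    (a * b) ^ n * dihedralWord a b c = dihedralWord a b (c + 2 * n) := by
  rw [dihedralWord, dihedralWord, ← mul_assoc, ← zpow_add]
  congr 2 <;> omega

variable {a b}

theorem mul_dihedralWord_left (ha : a ^ 2 = 1) (hb : b ^ 2 = 1) (c : ℤ) :
    a * dihedralWord a b c = dihedralWord a b (1 - c) := by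
  have ha' : a⁻¹ = a := inv_eq_of_mul_eq_one_right (by rw [← sq, ha])
  have hb' : b⁻¹ = b := inv_eq_of_mul_eq_one_right (by rw [← sq, hb])
  have hconj : a * (a * b) * a⁻¹ = (a * b)⁻¹ := by
    rw [mul_inv_rev, hb', ha', ← mul_assoc, ← sq, ha, one_mul]
  have hpar : a * a ^ (c % 2) = a ^ ((1 - c) % 2) := by
    rw [← zpow_one_add, zpow_eq_zpow_emod' _ ha]
    congr 1
    omega
  calc a * dihedralWord a b c
      = (a * (a * b) * a⁻¹) ^ (c / 2) * (a * a ^ (c % 2)) := by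
        rw [conj_zpow, dihedralWord]; group
    _ = dihedralWord a b (1 - c) := by
        rw [hconj, hpar, dihedralWord, inv_zpow', show -(c / 2) = (1 - c) / 2 by omega]

theorem mul_dihedralWord_right (ha : a ^ 2 = 1) (hb : b ^ 2 = 1) (c : ℤ) :
    b * dihedralWord a b c = dihedralWord a b (-1 - c) := by
  have hb' : b = (a * b) ^ (-1 : ℤ) * a := by
    rw [zpow_neg_one, mul_inv_rev, inv_mul_cancel_right,
      inv_eq_of_mul_eq_one_right (by rw [← sq, hb])]
  calc b * dihedralWord a b c = (a * b) ^ (-1 : ℤ) * (a * dihedralWord a b c) := by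
        rw [← mul_assoc, ← hb']
    _ = dihedralWord a b (-1 - c) := by
        rw [mul_dihedralWord_left ha hb, zpow_mul_dihedralWord,
          show 1 - c + 2 * -1 = -1 - c by ring]

end DihedralWord

theorem gen_sq (k : ℕ) (s : Fin (k + 1)) : gen k s ^ 2 = 1 := by
  rw [gen, ← map_pow, show Multiplicative.ofAdd (1 : ZMod 2) ^ 2 = 1 by decide, map_one]

theorem of_eq_one_or_eq_gen {k : ℕ} (s : Fin (k + 1)) (m : Multiplicative (ZMod 2)) :
    (Monoid.CoprodI.of (i := s) m : G k) = 1 ∨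
      (Monoid.CoprodI.of (i := s) m : G k) = gen k s := by
  rcases (show m = 1 ∨ m = Multiplicative.ofAdd 1 by revert m; decide) with rfl | rfl
  · exact Or.inl (map_one _)
  · exact Or.inr rfl

section CosetIndex

variable {k : ℕ} {i j : Fin (k + 1)} {ρ : G k →* Equiv.Perm ℤ}

theorem cosetIdx_dihedralWord (hρi : ∀ n : ℤ, ρ (gen k i) n = 1 - n)
    (hρj : ∀ n : ℤ, ρ (gen k j) n = -1 - n) (c : ℤ) :
    cosetIdx ρ (dihedralWord (gen k i) (gen k j) c) = c := by
  have htrans : ρ (gen k i * gen k j) = Equiv.addRight 2 := by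
    ext n
    simp only [map_mul, Equiv.Perm.mul_apply, hρi, hρj, Equiv.coe_addRight]
    ring
  have hpar : ρ (gen k i ^ (c % 2)) 0 = c % 2 := by
    rcases Int.emod_two_eq c with h | h <;> simp [h, hρi]
  rw [cosetIdx, dihedralWord, map_mul, Equiv.Perm.mul_apply, hpar, map_zpow, htrans,
    Equiv.zsmul_addRight, Equiv.coe_addRight, smul_eq_mul]
  dsimp only
  omega

theorem mul_dihedralWord_eq_dihedralWord_apply {Γ : Type*} [Group Γ]
    (hρi : ∀ n : ℤ, ρ (gen k i) n = 1 - n) (hρj : ∀ n : ℤ, ρ (gen k j) n = -1 - n)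
    (hρs : ∀ s : Fin (k + 1), s ≠ i → s ≠ j → ρ (gen k s) = 1) (ψ : G k →* Γ)
    (hψs : ∀ s : Fin (k + 1), s ≠ i → s ≠ j → ψ (gen k s) = 1) (x : G k) (c : ℤ) :
    ψ x * dihedralWord (ψ (gen k i)) (ψ (gen k j)) c =
      dihedralWord (ψ (gen k i)) (ψ (gen k j)) (ρ x c) := by
  have ha : ψ (gen k i) ^ 2 = 1 := by rw [← map_pow, gen_sq, map_one]
  have hb : ψ (gen k j) ^ 2 = 1 := by rw [← map_pow, gen_sq, map_one]
  induction x using Monoid.CoprodI.induction_on generalizing c with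
  | one => simp
  | mul x y hx hy => rw [map_mul, map_mul, Equiv.Perm.mul_apply, mul_assoc, hy, hx]
  | of s m =>
    rcases of_eq_one_or_eq_gen s m with h | h
    · simp [h]
    rw [h]
    by_cases hsi : s = i
    · rw [hsi, hρi, mul_dihedralWord_left ha hb]
    by_cases hsj : s = j
    · rw [hsj, hρj, mul_dihedralWord_right ha hb]
    rw [hψs s hsi hsj, hρs s hsi hsj, one_mul, Equiv.Perm.one_apply]

end CosetIndex

theorem stmt5_general (k : ℕ) (i j : Fin (k + 1))
    (ρ : G k →* Equiv.Perm ℤ)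
    (hρi : ∀ n : ℤ, ρ (gen k i) n = 1 - n)
    (hρj : ∀ n : ℤ, ρ (gen k j) n = -1 - n)
    (hρs : ∀ s : Fin (k + 1), s ≠ i → s ≠ j → ρ (gen k s) = 1)
    (f : G k →* G k)
    (hfi : f (gen k i) = gen k i) (hfj : f (gen k j) = gen k j)
    (hfs : ∀ s : Fin (k + 1), s ≠ i → s ≠ j → f (gen k s) = 1) :
    Function.Surjective (cosetIdx ρ) ∧
      ∀ x y : G k, cosetIdx ρ x = cosetIdx ρ y ↔ x⁻¹ * y ∈ f.ker := by
  have hw : Function.LeftInverse (cosetIdx ρ) (dihedralWord (gen k i) (gen k j)) :=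
    cosetIdx_dihedralWord hρi hρj
  have hf (x : G k) : f x = dihedralWord (gen k i) (gen k j) (cosetIdx ρ x) := by
    have h := mul_dihedralWord_eq_dihedralWord_apply hρi hρj hρs f hfs x 0
    rwa [hfi, hfj, dihedralWord_zero, mul_one] at h
  refine ⟨hw.surjective, fun x y => ?_⟩
  rw [MonoidHom.mem_ker, map_mul, map_inv, inv_mul_eq_one, hf, hf, hw.injective.eq_iff]

theorem stmt5 (k : ℕ) (hk : 1 ≤ k) (i j : Fin (k + 1)) (hij : i ≠ j)
    (ρ : G k →* Equiv.Perm ℤ)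
    (hρi : ∀ n : ℤ, ρ (gen k i) n = 1 - n)
    (hρj : ∀ n : ℤ, ρ (gen k j) n = -1 - n)
    (hρs : ∀ s : Fin (k + 1), s ≠ i → s ≠ j → ρ (gen k s) = 1)
    (f : G k →* G k)
    (hfi : f (gen k i) = gen k i) (hfj : f (gen k j) = gen k j)
    (hfs : ∀ s : Fin (k + 1), s ≠ i → s ≠ j → f (gen k s) = 1) :
    Function.Surjective (cosetIdx ρ) ∧
      ∀ x y : G k, cosetIdx ρ x = cosetIdx ρ y ↔ x⁻¹ * y ∈ f.ker :=
  stmt5_general k i j ρ hρi hρj hρs f hfi hfj hfs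
end
end

section
/- (Lemma 1) Let $x \in G_k$ with $\phi(x) = n$, and let $S(x) = \{x a_s : s = 0,\dots,k\}$ be the neighbor set of $x$. Then $S(x) \subseteq H_{n-1} \cup H_n \cup H_{n+1}$, and moreover $|S(x) \cap H_{n-1}| = 1$, $|S(x) \cap H_n| = k - 1$, and $|S(x) \cap H_{n+1}| = 1$, where $H_m = \phi^{-1}(m)$. -/
open scoped BigOperators

noncomputable section

/-
Every `ρ z` is an isometry `m ↦ ±m + c` of `ℤ`, because the generators act by such maps. So
`ρ x` has the form `m ↦ ±m + n`, and `φ(x a_s) = ρ x (ρ a_s 0)` equals `n ± 1` for `s = i`,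
`n ∓ 1` for `s = j` and `n` otherwise. Since `s ↦ x a_s` is injective, counting neighbours in
`H_m` amounts to counting indices `s`.
-/

def dihedralPerms : Submonoid (Equiv.Perm ℤ) where
  carrier := {σ | ∃ ε : ℤˣ, ∃ c : ℤ, ∀ m, σ m = ε * m + c}
  mul_mem' := by
    rintro σ τ ⟨ε, c, hσ⟩ ⟨δ, d, hτ⟩
    refine ⟨ε * δ, ε * d + c, fun m => ?_⟩
    simp only [Equiv.Perm.mul_apply, hσ, hτ]
    push_cast
    ring
  one_mem' := ⟨1, 0, by simp⟩

lemma gen_injective (k : ℕ) : Function.Injective (gen k) := by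
  intro s t hst
  by_contra hne
  have := congrArg (Monoid.CoprodI.lift (Pi.mulSingle s (MonoidHom.id _))) hst
  simp only [gen, Monoid.CoprodI.lift_of, Pi.mulSingle_eq_same,
    Pi.mulSingle_eq_of_ne (Ne.symm hne)] at this
  exact absurd this (by decide)

lemma map_mem_of_forall_gen_mem {k : ℕ} {M : Type*} [Monoid M] (S : Submonoid M) (f : G k →* M)
    (h : ∀ s, f (gen k s) ∈ S) (z : G k) : f z ∈ S := by
  induction z using Monoid.CoprodI.induction_on with
  | one => simp [S.one_mem]
  | of s m =>
    obtain rfl | rfl : m = 1 ∨ m = Multiplicative.ofAdd (1 : ZMod 2) := by revert m; decide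
    · simp [S.one_mem]
    · exact h s
  | mul a b ha hb => simpa using S.mul_mem ha hb

lemma ncard_image_univ_inter_setOf {ι α : Type*} {g : ι → α} (hg : Function.Injective g)
    (c : α → ℤ) (m : ℤ) :
    (g '' Set.univ ∩ {y | c y = m}).ncard = {s | c (g s) = m}.ncard := by
  rw [← Set.image_inter_preimage g Set.univ, Set.univ_inter, Set.ncard_image_of_injective _ hg]
  rfl

section ThreeValued

variable {ι : Type*} [Fintype ι] {i j : ι} {f : ι → ℤ} {n : ℤ}

lemma ncard_setOf_eq_of_step (hij : i ≠ j) (hfi : f i = n + 1) (hfj : f j = n - 1)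
    (hf : ∀ s, s ≠ i → s ≠ j → f s = n) :
    (∀ s, f s = n - 1 ∨ f s = n ∨ f s = n + 1) ∧ {s | f s = n - 1}.ncard = 1 ∧
      {s | f s = n}.ncard = Fintype.card ι - 2 ∧ {s | f s = n + 1}.ncard = 1 := by
  classical
  have hval : ∀ s, f s = if s = i then n + 1 else if s = j then n - 1 else n := by
    intro s
    split_ifs with hi hj
    · rw [hi, hfi]
    · rw [hj, hfj]
    · exact hf s hi hj
  have h_pred : {s | f s = n - 1} = {j} := by
    ext s; simp only [Set.mem_ofPred_eq, Set.mem_singleton_iff, hval]; split_ifs <;> grind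
  have h_succ : {s | f s = n + 1} = {i} := by
    ext s; simp only [Set.mem_ofPred_eq, Set.mem_singleton_iff, hval]; split_ifs <;> grind
  have h_same : {s | f s = n} = ↑({i, j} : Finset ι)ᶜ := by
    ext s; simp only [Set.mem_ofPred_eq, Finset.coe_compl, Set.mem_compl_iff, Finset.coe_insert,
      Finset.coe_singleton, Set.mem_insert_iff, Set.mem_singleton_iff, hval]; split_ifs <;> grind
  refine ⟨fun s => by rw [hval s]; split_ifs <;> omega, by simp [h_pred], ?_, by simp [h_succ]⟩
  rw [h_same, Set.ncard_coe_finset, Finset.card_compl, Finset.card_pair hij]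

lemma ncard_setOf_eq_of_unit_step (hij : i ≠ j) (ε : ℤˣ) (hfi : f i = n + ε)
    (hfj : f j = n - ε) (hf : ∀ s, s ≠ i → s ≠ j → f s = n) :
    (∀ s, f s = n - 1 ∨ f s = n ∨ f s = n + 1) ∧ {s | f s = n - 1}.ncard = 1 ∧
      {s | f s = n}.ncard = Fintype.card ι - 2 ∧ {s | f s = n + 1}.ncard = 1 := by
  rcases Int.units_eq_one_or ε with rfl | rfl
  · exact ncard_setOf_eq_of_step hij hfi hfj hf
  · exact ncard_setOf_eq_of_step hij.symm (by simpa [sub_eq_add_neg] using hfj)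
      (by simpa [sub_eq_add_neg] using hfi) fun s hj hi => hf s hi hj

end ThreeValued

theorem stmt6_general (k : ℕ) (i j : Fin (k + 1)) (hij : i ≠ j)
    (ρ : G k →* Equiv.Perm ℤ)
    (hρi : ∀ n : ℤ, ρ (gen k i) n = 1 - n)
    (hρj : ∀ n : ℤ, ρ (gen k j) n = -1 - n)
    (hρs : ∀ s : Fin (k + 1), s ≠ i → s ≠ j → ρ (gen k s) = 1)
    (x : G k) (n : ℤ) (hx : cosetIdx ρ x = n) :
    (∀ y ∈ (fun s : Fin (k + 1) => x * gen k s) '' Set.univ,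
        cosetIdx ρ y = n - 1 ∨ cosetIdx ρ y = n ∨ cosetIdx ρ y = n + 1) ∧
      (((fun s : Fin (k + 1) => x * gen k s) '' Set.univ ∩
        {y : G k | cosetIdx ρ y = n - 1}).ncard = 1) ∧
      (((fun s : Fin (k + 1) => x * gen k s) '' Set.univ ∩
        {y : G k | cosetIdx ρ y = n}).ncard = k - 1) ∧
      (((fun s : Fin (k + 1) => x * gen k s) '' Set.univ ∩
        {y : G k | cosetIdx ρ y = n + 1}).ncard = 1) := by
  have h_gen : ∀ s, ρ (gen k s) ∈ dihedralPerms := by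
    intro s
    by_cases hi : s = i
    · exact hi ▸ ⟨-1, 1, fun m => by rw [hρi]; push_cast; ring⟩
    by_cases hj : s = j
    · exact hj ▸ ⟨-1, -1, fun m => by rw [hρj]; push_cast; ring⟩
    · exact hρs s hi hj ▸ dihedralPerms.one_mem
  obtain ⟨ε, c, hρx⟩ := map_mem_of_forall_gen_mem dihedralPerms ρ h_gen x
  have hc : c = n := by simpa [cosetIdx, hρx] using hx
  have h_nbr : ∀ s, cosetIdx ρ (x * gen k s) = n + ε * ρ (gen k s) 0 := by
    intro s
    rw [cosetIdx, map_mul, Equiv.Perm.mul_apply, hρx, hc, add_comm]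
  obtain ⟨h_range, h_pred, h_same, h_succ⟩ := ncard_setOf_eq_of_unit_step hij ε
    (f := fun s => cosetIdx ρ (x * gen k s)) (n := n) (by simp [h_nbr, hρi])
    (by simp [h_nbr, hρj, sub_eq_add_neg])
    (fun s hi hj => by simp [h_nbr, hρs s hi hj])
  have h_inj : Function.Injective fun s => x * gen k s :=
    (mul_right_injective x).comp (gen_injective k)
  refine ⟨fun _ ⟨s, _, hs⟩ => hs ▸ h_range s, ?_, ?_, ?_⟩ <;>
    rw [ncard_image_univ_inter_setOf h_inj]
  · exact h_pred
  · simpa using h_same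
  · exact h_succ

theorem stmt6 (k : ℕ) (hk : 1 ≤ k) (i j : Fin (k + 1)) (hij : i ≠ j)
    (ρ : G k →* Equiv.Perm ℤ)
    (hρi : ∀ n : ℤ, ρ (gen k i) n = 1 - n)
    (hρj : ∀ n : ℤ, ρ (gen k j) n = -1 - n)
    (hρs : ∀ s : Fin (k + 1), s ≠ i → s ≠ j → ρ (gen k s) = 1)
    (x : G k) (n : ℤ) (hx : cosetIdx ρ x = n) :
    (∀ y ∈ (fun s : Fin (k + 1) => x * gen k s) '' Set.univ,
        cosetIdx ρ y = n - 1 ∨ cosetIdx ρ y = n ∨ cosetIdx ρ y = n + 1) ∧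
      (((fun s : Fin (k + 1) => x * gen k s) '' Set.univ ∩
        {y : G k | cosetIdx ρ y = n - 1}).ncard = 1) ∧
      (((fun s : Fin (k + 1) => x * gen k s) '' Set.univ ∩
        {y : G k | cosetIdx ρ y = n}).ncard = k - 1) ∧
      (((fun s : Fin (k + 1) => x * gen k s) '' Set.univ ∩
        {y : G k | cosetIdx ρ y = n + 1}).ncard = 1) :=
  stmt6_general k i j hij ρ hρi hρj hρs x n hx
end
end

section
/- (Theorem 3, family $U_1$) Assume $(\varrho_n)_{n \in \mathbb{Z}}$ is summable. For every constant $C \ge 0$, the function $u : G_k \to \mathbb{R}$ defined by $u(x) = C \cdot \Sigma^-(\phi(x)) = C \sum_{s \le \phi(x) - 1} \varrho_s$ is $H_{ij}$-periodic and $p$-harmonic on the Cayley tree: $\Delta_p u(x) = 0$ for all $x \in G_k$, and $u(yx) = u(x)$ for all $y \in H_{ij}$, $x \in G_k$. -/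
/-!
Since `ρ ∘ f` and `ρ` agree on the generators, `ρ` is trivial on `H_ij = ker f`, so the coset
index `φ` and with it `u = C · Σ⁻ ∘ φ` are `H_ij`-periodic. Every `ρ x` is an isometry of `ℤ`,
hence the neighbours `x a_i` and `x a_j` of `x` have indices `φ x ± 1` (in some order), while the
other neighbours have index `φ x`. Along the edge from index `n` to `n + 1` the resistance is `ϱ n`
and `u` increases by `C ϱ n`, so the two non-zero terms of `Δ_p u x` are `φ_p C` and `φ_p (-C)`,
which cancel because `φ_p` is odd.
-/

open scoped BigOperators

noncomputable section

/-- The paper's `Σ⁻`. -/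
def sumBelow (ϱ : ℤ → ℝ) (n : ℤ) : ℝ := ∑' s : {m : ℤ // m < n}, ϱ s

open Set in
lemma sumBelow_add_one {ϱ : ℤ → ℝ} (hϱ : Summable ϱ) (n : ℤ) :
    sumBelow ϱ (n + 1) = sumBelow ϱ n + ϱ n := by
  have hIio : Iio (n + 1) = Iio n ∪ {n} := by
    rw [Iio_add_one_eq_Iic, union_singleton, Iio_insert]
  calc sumBelow ϱ (n + 1) = ∑' s : ↑(Iio n ∪ {n}), ϱ s := tsum_congr_set_coe ϱ hIio
    _ = _ := by
      rw [hϱ.subtype _ |>.tsum_union_disjoint (by simp) (hϱ.subtype _), tsum_singleton]; rfl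

section Slope

variable {α : Type*} {ψ : α → ℤ} {ϱ : ℤ → ℝ} {r : α × α → ℝ}

lemma mul_sumBelow_sub_div_of_succ (hϱ : Summable ϱ) (hϱ_ne : ∀ n, ϱ n ≠ 0)
    (hrϱ : ∀ x y, ψ y = ψ x + 1 → r (x, y) = ϱ (ψ x)) (C : ℝ) {x y : α} (h : ψ y = ψ x + 1) :
    (C * sumBelow ϱ (ψ y) - C * sumBelow ϱ (ψ x)) / r (x, y) = C := by
  rw [hrϱ x y h, h, sumBelow_add_one hϱ, mul_add, add_sub_cancel_left,
    mul_div_cancel_right₀ _ (hϱ_ne _)]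

lemma mul_sumBelow_sub_div_of_pred (hϱ : Summable ϱ) (hϱ_ne : ∀ n, ϱ n ≠ 0)
    (hrϱ : ∀ x y, ψ y = ψ x + 1 → r (x, y) = ϱ (ψ x)) (hr : ∀ x y, r (x, y) = r (y, x))
    (C : ℝ) {x y : α} (h : ψ y = ψ x - 1) :
    (C * sumBelow ϱ (ψ y) - C * sumBelow ϱ (ψ x)) / r (x, y) = -C := by
  rw [hr, ← neg_sub (C * sumBelow ϱ (ψ x)), neg_div,
    mul_sumBelow_sub_div_of_succ hϱ hϱ_ne hrϱ C (by omega)]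

end Slope

namespace G

variable {k : ℕ}

@[elab_as_elim]
lemma induction_on {P : G k → Prop} (x : G k) (one : P 1) (gen : ∀ s, P (gen k s))
    (mul : ∀ x y, P x → P y → P (x * y)) : P x := by
  induction x using Monoid.CoprodI.induction_on with
  | one => exact one
  | of s m =>
    rcases (by decide : ∀ m : Multiplicative (ZMod 2), m = 1 ∨ m = .ofAdd 1) m with rfl | rfl
    · simpa using one
    · exact gen s
  | mul x y hx hy => exact mul x y hx hy

lemma hom_ext {M : Type*} [Monoid M] {φ ψ : G k →* M} (h : ∀ s, φ (gen k s) = ψ (gen k s)) :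
    φ = ψ :=
  MonoidHom.ext fun x => induction_on x (by simp) h fun x y hx hy => by simp [hx, hy]

end G

lemma abs_sub_eq_of_gen {k : ℕ} {ρ : G k →* Equiv.Perm ℤ}
    (h : ∀ s m n, |ρ (gen k s) m - ρ (gen k s) n| = |m - n|) (x : G k) (m n : ℤ) :
    |ρ x m - ρ x n| = |m - n| := by
  induction x using G.induction_on generalizing m n with
  | one => simp
  | gen s => exact h s m n
  | mul x y hx hy => simp [hx, hy]

lemma Int.eq_add_one_or_eq_sub_one_of_isometry {σ : ℤ → ℤ} (hσ : ∀ m n, |σ m - σ n| = |m - n|) :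
    σ 1 = σ 0 + 1 ∧ σ (-1) = σ 0 - 1 ∨ σ 1 = σ 0 - 1 ∧ σ (-1) = σ 0 + 1 := by
  have h₁ := hσ 1 0
  have h₂ := hσ (-1) 0
  have h₃ := hσ 1 (-1)
  norm_num at h₁ h₂ h₃
  rw [abs_eq (by norm_num)] at h₁ h₂ h₃
  omega

lemma phiP_neg (p t : ℝ) : phiP p (-t) = -phiP p t := by
  simp [phiP]

lemma pLap_eq_add_of_mul_gen_eq {k : ℕ} {p : ℝ} {r : G k × G k → ℝ} {u : G k → ℝ} {x : G k}
    {i j : Fin (k + 1)} (hij : i ≠ j) (hu : ∀ s, s ≠ i → s ≠ j → u (x * gen k s) = u x) :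
    pLap k p r u x = phiP p ((u (x * gen k i) - u x) / r (x, x * gen k i))
      + phiP p ((u (x * gen k j) - u x) / r (x, x * gen k j)) :=
  Finset.sum_eq_add i j hij (fun s _ hs => by simp [hu s hs.1 hs.2, phiP]) (by simp) (by simp)

theorem stmt8_general (k : ℕ) (p : ℝ)
    (r : G k × G k → ℝ) (hr_symm : ∀ x y : G k, r (x, y) = r (y, x))
    (i j : Fin (k + 1)) (hij : i ≠ j)
    (ρ : G k →* Equiv.Perm ℤ)
    (hρi : ∀ n : ℤ, ρ (gen k i) n = 1 - n)
    (hρj : ∀ n : ℤ, ρ (gen k j) n = -1 - n)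
    (hρs : ∀ s : Fin (k + 1), s ≠ i → s ≠ j → ρ (gen k s) = 1)
    (f : G k →* G k)
    (hfi : f (gen k i) = gen k i) (hfj : f (gen k j) = gen k j)
    (hfs : ∀ s : Fin (k + 1), s ≠ i → s ≠ j → f (gen k s) = 1)
    (ϱ : ℤ → ℝ) (hϱ_pos : ∀ n : ℤ, 0 < ϱ n)
    (hrϱ : ∀ x y : G k, cosetIdx ρ y = cosetIdx ρ x + 1 → r (x, y) = ϱ (cosetIdx ρ x))
    (hϱ_sum : Summable ϱ)
    (C : ℝ) :
    IsPeriodic k f.ker (fun x => C * (∑' s : {m : ℤ // m < cosetIdx ρ x}, ϱ s)) ∧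
      ∀ x : G k, pLap k p r (fun x => C * (∑' s : {m : ℤ // m < cosetIdx ρ x}, ϱ s)) x = 0 := by
  have hρf : ρ.comp f = ρ := G.hom_ext fun s => by
    by_cases hsi : s = i
    · simp [hsi, hfi]
    by_cases hsj : s = j
    · simp [hsj, hfj]
    simp [hfs s hsi hsj, hρs s hsi hsj]
  have hρ_isometry : ∀ x m n, |ρ x m - ρ x n| = |m - n| := abs_sub_eq_of_gen fun s m n => by
    by_cases hsi : s = i
    · rw [hsi, hρi, hρi, sub_sub_sub_cancel_left, abs_sub_comm]
    by_cases hsj : s = j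
    · rw [hsj, hρj, hρj, sub_sub_sub_cancel_left, abs_sub_comm]
    simp [hρs s hsi hsj]
  have hϱ_ne n := (hϱ_pos n).ne'
  change IsPeriodic k f.ker (fun x => C * sumBelow ϱ (cosetIdx ρ x)) ∧
    ∀ x, pLap k p r (fun x => C * sumBelow ϱ (cosetIdx ρ x)) x = 0
  refine ⟨fun y hy x => ?_, fun x => ?_⟩
  · have hρy : ρ y = 1 := by rw [← hρf, MonoidHom.comp_apply, MonoidHom.mem_ker.mp hy, map_one]
    simp [cosetIdx, hρy]
  rw [pLap_eq_add_of_mul_gen_eq hij fun s hsi hsj => by simp [cosetIdx, hρs s hsi hsj]]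
  have hi : cosetIdx ρ (x * gen k i) = ρ x 1 := by simp [cosetIdx, hρi]
  have hj : cosetIdx ρ (x * gen k j) = ρ x (-1) := by simp [cosetIdx, hρj]
  rcases Int.eq_add_one_or_eq_sub_one_of_isometry (hρ_isometry x) with ⟨h₁, h₂⟩ | ⟨h₁, h₂⟩
  · rw [mul_sumBelow_sub_div_of_succ hϱ_sum hϱ_ne hrϱ C (hi.trans h₁),
      mul_sumBelow_sub_div_of_pred hϱ_sum hϱ_ne hrϱ hr_symm C (hj.trans h₂), phiP_neg,
      add_neg_cancel]
  · rw [mul_sumBelow_sub_div_of_pred hϱ_sum hϱ_ne hrϱ hr_symm C (hi.trans h₁),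
      mul_sumBelow_sub_div_of_succ hϱ_sum hϱ_ne hrϱ C (hj.trans h₂), phiP_neg, neg_add_cancel]

theorem stmt8 (k : ℕ) (hk : 1 ≤ k) (p : ℝ) (hp1 : 1 < p)
    (r : G k × G k → ℝ) (hr_symm : ∀ x y : G k, r (x, y) = r (y, x)) (hr_pos : ∀ x y : G k, 0 < r (x, y))
    (i j : Fin (k + 1)) (hij : i ≠ j)
    (ρ : G k →* Equiv.Perm ℤ)
    (hρi : ∀ n : ℤ, ρ (gen k i) n = 1 - n)
    (hρj : ∀ n : ℤ, ρ (gen k j) n = -1 - n)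
    (hρs : ∀ s : Fin (k + 1), s ≠ i → s ≠ j → ρ (gen k s) = 1)
    (f : G k →* G k)
    (hfi : f (gen k i) = gen k i) (hfj : f (gen k j) = gen k j)
    (hfs : ∀ s : Fin (k + 1), s ≠ i → s ≠ j → f (gen k s) = 1)
    (ϱ : ℤ → ℝ) (hϱ_pos : ∀ n : ℤ, 0 < ϱ n)
    (hrϱ : ∀ x y : G k, cosetIdx ρ y = cosetIdx ρ x + 1 → r (x, y) = ϱ (cosetIdx ρ x))
    (hϱ_sum : Summable ϱ)
    (C : ℝ) (hC : 0 ≤ C) :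
    IsPeriodic k f.ker (fun x => C * (∑' s : {m : ℤ // m < cosetIdx ρ x}, ϱ s)) ∧
      ∀ x : G k, pLap k p r (fun x => C * (∑' s : {m : ℤ // m < cosetIdx ρ x}, ϱ s)) x = 0 :=
  stmt8_general k p r hr_symm i j hij ρ hρi hρj hρs f hfi hfj hfs ϱ hϱ_pos hrϱ hϱ_sum C
end
end

section
/- Let $g : \mathbb{Z} \to \mathbb{R}$ and suppose $u = g \circ \phi$ is $p$-harmonic ($\Delta_p u(x) = 0$ for all $x \in G_k$). Then the sequence $g$ is monotone: either $g(n+1) \ge g(n)$ for all $n \in \mathbb{Z}$, or $g(n+1) \le g(n)$ for all $n \in \mathbb{Z}$. -/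
open scoped BigOperators

noncomputable section

/-!
Each `ρ x` is an isometry of `ℤ`, since the generators act by the reflections `n ↦ 1 - n`,
`n ↦ -1 - n` or trivially. So from a vertex `x` of level `n = φ(x)` the edges along `a_i` and
`a_j` lead to the levels `n + 1` and `n - 1` (in some order) and all other edges stay at level
`n`. Thus `Δ_p u(x) = φ_p(d n) - φ_p(d (n - 1))` with the flux `d n = (g (n + 1) - g n) / ϱ n`,
and since every level is attained and `φ_p` is injective, harmonicity makes the flux constant.
Hence every increment `g (n + 1) - g n = d 0 * ϱ n` has the sign of `d 0`.
-/

lemma phiP_zero (p : ℝ) : phiP p 0 = 0 := by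
  simp [phiP]

lemma phiP_of_nonneg {p t : ℝ} (hp : 1 < p) (ht : 0 ≤ t) : phiP p t = t ^ (p - 1) := by
  rw [phiP, abs_of_nonneg ht, ← Real.rpow_add_one' ht (by linarith)]
  ring_nf

lemma phiP_strictMono {p : ℝ} (hp : 1 < p) : StrictMono (phiP p) := by
  refine strictMono_of_odd_strictMonoOn_nonneg (phiP_neg p) ?_
  refine (Real.strictMonoOn_rpow_Ici_of_exponent_pos (sub_pos.mpr hp)).congr ?_
  intro t ht
  exact (phiP_of_nonneg hp ht).symm

theorem monotone_or_antitone_of_odd_flux_balance {f : ℝ → ℝ} (hf : Function.Injective f)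
    (hf_odd : ∀ t, f (-t) = -f t) {g ϱ : ℤ → ℝ} (hϱ : ∀ n, 0 < ϱ n)
    (hbal : ∀ n, f ((g (n + 1) - g n) / ϱ n) + f ((g (n - 1) - g n) / ϱ (n - 1)) = 0) :
    Monotone g ∨ Antitone g := by
  set d : ℤ → ℝ := fun n => (g (n + 1) - g n) / ϱ n
  have hd : Function.Periodic d 1 := by
    intro n
    refine hf ?_
    have h := hbal (n + 1)
    rw [add_sub_cancel_right, ← neg_sub (g (n + 1)) (g n), neg_div, hf_odd] at h
    show f ((g (n + 1 + 1) - g (n + 1)) / ϱ (n + 1)) = f ((g (n + 1) - g n) / ϱ n)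
    linarith
  have hconst : ∀ n, d n = d 0 := fun n => by simpa using hd.int_mul_eq n
  have hstep : ∀ n, g (n + 1) - g n = d 0 * ϱ n := fun n => by
    rw [← hconst n]
    exact (div_mul_cancel₀ _ (hϱ n).ne').symm
  rcases le_total 0 (d 0) with h0 | h0
  · exact .inl <| monotone_int_of_le_succ fun n => by
      nlinarith [hstep n, hϱ n]
  · exact .inr <| antitone_int_of_succ_le fun n => by
      nlinarith [hstep n, hϱ n]

lemma Int.isometry_apply_one_and_neg_one {σ : ℤ → ℤ} (hσ : Isometry σ) :
    (σ 1 = σ 0 + 1 ∧ σ (-1) = σ 0 - 1) ∨ (σ 1 = σ 0 - 1 ∧ σ (-1) = σ 0 + 1) := by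
  have hdist : ∀ m n, |σ m - σ n| = |m - n| := fun m n => by
    have := hσ.dist_eq m n
    rwa [Int.dist_eq', Int.dist_eq', Int.cast_inj] at this
  have h1 := hdist 1 0
  have h2 := hdist (-1) 0
  have h3 := hdist 1 (-1)
  norm_num [abs_eq] at h1 h2 h3
  omega

section CosetIndex

variable {k : ℕ} (ρ : G k →* Equiv.Perm ℤ)

lemma cosetIdx_one : cosetIdx ρ 1 = 0 := by
  simp [cosetIdx]

lemma cosetIdx_mul_gen (x : G k) (s : Fin (k + 1)) :
    cosetIdx ρ (x * gen k s) = ρ x (ρ (gen k s) 0) := by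
  simp [cosetIdx]

lemma isometry_of_isometry_gen (h : ∀ s, Isometry (ρ (gen k s))) (x : G k) :
    Isometry (ρ x) := by
  induction x using Monoid.CoprodI.induction_on with
  | one => simpa using isometry_id (α := ℤ)
  | of s m =>
    obtain ⟨a, rfl⟩ : ∃ a : ZMod 2, Multiplicative.ofAdd a = m := ⟨m.toAdd, rfl⟩
    obtain rfl | rfl : a = 0 ∨ a = 1 := by revert a; decide
    · simpa using isometry_id (α := ℤ)
    · exact h s
  | mul x y hx hy => simpa using hx.comp hy

end CosetIndex

section Levels

variable {k : ℕ} {ρ : G k →* Equiv.Perm ℤ} {i j : Fin (k + 1)}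

lemma cosetIdx_mul_gen_of_ne (hρs : ∀ s : Fin (k + 1), s ≠ i → s ≠ j → ρ (gen k s) = 1)
    (x : G k) (s : Fin (k + 1)) (hsi : s ≠ i) (hsj : s ≠ j) :
    cosetIdx ρ (x * gen k s) = cosetIdx ρ x := by
  simp [hρs s hsi hsj, cosetIdx]

lemma cosetIdx_mul_gen_eq_add_sub (hρi : ∀ n : ℤ, ρ (gen k i) n = 1 - n)
    (hρj : ∀ n : ℤ, ρ (gen k j) n = -1 - n)
    (hρs : ∀ s : Fin (k + 1), s ≠ i → s ≠ j → ρ (gen k s) = 1) (x : G k) :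
    (cosetIdx ρ (x * gen k i) = cosetIdx ρ x + 1 ∧ cosetIdx ρ (x * gen k j) = cosetIdx ρ x - 1) ∨
    (cosetIdx ρ (x * gen k i) = cosetIdx ρ x - 1 ∧ cosetIdx ρ (x * gen k j) = cosetIdx ρ x + 1) := by
  have hgen : ∀ s, Isometry (ρ (gen k s)) := by
    intro s
    by_cases hsi : s = i
    · subst hsi
      rw [show ⇑(ρ (gen k s)) = (1 - ·) from funext hρi]
      exact (IsometryEquiv.subLeft 1).isometry
    by_cases hsj : s = j
    · subst hsj
      rw [show ⇑(ρ (gen k s)) = (-1 - ·) from funext hρj]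
      exact (IsometryEquiv.subLeft (-1)).isometry
    simpa [hρs s hsi hsj] using isometry_id (α := ℤ)
  simpa [cosetIdx_mul_gen, hρi, hρj, cosetIdx] using
    Int.isometry_apply_one_and_neg_one (isometry_of_isometry_gen ρ hgen x)

lemma cosetIdx_surjective (hρi : ∀ n : ℤ, ρ (gen k i) n = 1 - n)
    (hρj : ∀ n : ℤ, ρ (gen k j) n = -1 - n)
    (hρs : ∀ s : Fin (k + 1), s ≠ i → s ≠ j → ρ (gen k s) = 1) :
    Function.Surjective (cosetIdx ρ) := by
  intro n
  induction n using Int.induction_on with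
  | zero => exact ⟨1, cosetIdx_one ρ⟩
  | succ n ih =>
    obtain ⟨x, hx⟩ := ih
    rcases cosetIdx_mul_gen_eq_add_sub hρi hρj hρs x with ⟨hi, -⟩ | ⟨-, hj⟩
    exacts [⟨_, hi.trans (by rw [hx])⟩, ⟨_, hj.trans (by rw [hx])⟩]
  | pred n ih =>
    obtain ⟨x, hx⟩ := ih
    rcases cosetIdx_mul_gen_eq_add_sub hρi hρj hρs x with ⟨-, hj⟩ | ⟨hi, -⟩
    exacts [⟨_, hj.trans (by rw [hx])⟩, ⟨_, hi.trans (by rw [hx])⟩]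

end Levels

lemma pLap_eq_add_of_forall_ne {k : ℕ} {p : ℝ} {r : G k × G k → ℝ} {u : G k → ℝ} {x : G k}
    {a b : Fin (k + 1)} (hab : a ≠ b)
    (hfix : ∀ s, s ≠ a → s ≠ b → u (x * gen k s) = u x) :
    pLap k p r u x = phiP p ((u (x * gen k a) - u x) / r (x, x * gen k a)) +
      phiP p ((u (x * gen k b) - u x) / r (x, x * gen k b)) := by
  refine Fintype.sum_eq_add a b hab fun s hs => ?_
  rw [hfix s hs.1 hs.2, sub_self, zero_div, phiP_zero]

lemma pLap_comp_cosetIdx {k : ℕ} {p : ℝ} {r : G k × G k → ℝ} {ρ : G k →* Equiv.Perm ℤ}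
    {ϱ : ℤ → ℝ} {g : ℤ → ℝ} (hr_symm : ∀ x y : G k, r (x, y) = r (y, x))
    (hrϱ : ∀ x y : G k, cosetIdx ρ y = cosetIdx ρ x + 1 → r (x, y) = ϱ (cosetIdx ρ x))
    {x : G k} {a b : Fin (k + 1)} (hab : a ≠ b)
    (hup : cosetIdx ρ (x * gen k a) = cosetIdx ρ x + 1)
    (hdown : cosetIdx ρ (x * gen k b) = cosetIdx ρ x - 1)
    (hfix : ∀ s, s ≠ a → s ≠ b → cosetIdx ρ (x * gen k s) = cosetIdx ρ x) :
    pLap k p r (fun y => g (cosetIdx ρ y)) x =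
      phiP p ((g (cosetIdx ρ x + 1) - g (cosetIdx ρ x)) / ϱ (cosetIdx ρ x)) +
      phiP p ((g (cosetIdx ρ x - 1) - g (cosetIdx ρ x)) / ϱ (cosetIdx ρ x - 1)) := by
  rw [pLap_eq_add_of_forall_ne hab fun s hsa hsb => by rw [hfix s hsa hsb], hrϱ x _ hup,
    hr_symm, hrϱ _ x (by omega), hup, hdown]

theorem stmt11_general (k : ℕ) (p : ℝ) (hp1 : 1 < p)
    (r : G k × G k → ℝ) (hr_symm : ∀ x y : G k, r (x, y) = r (y, x))
    (i j : Fin (k + 1)) (hij : i ≠ j)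
    (ρ : G k →* Equiv.Perm ℤ)
    (hρi : ∀ n : ℤ, ρ (gen k i) n = 1 - n)
    (hρj : ∀ n : ℤ, ρ (gen k j) n = -1 - n)
    (hρs : ∀ s : Fin (k + 1), s ≠ i → s ≠ j → ρ (gen k s) = 1)
    (ϱ : ℤ → ℝ) (hϱ_pos : ∀ n : ℤ, 0 < ϱ n)
    (hrϱ : ∀ x y : G k, cosetIdx ρ y = cosetIdx ρ x + 1 → r (x, y) = ϱ (cosetIdx ρ x))
    (g : ℤ → ℝ) (hharm : ∀ x : G k, pLap k p r (fun x => g (cosetIdx ρ x)) x = 0) :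
    (∀ n : ℤ, g n ≤ g (n + 1)) ∨ (∀ n : ℤ, g (n + 1) ≤ g n) := by
  have hbal : ∀ n, phiP p ((g (n + 1) - g n) / ϱ n) +
      phiP p ((g (n - 1) - g n) / ϱ (n - 1)) = 0 := by
    intro n
    obtain ⟨x, rfl⟩ := cosetIdx_surjective hρi hρj hρs n
    have hfix := cosetIdx_mul_gen_of_ne hρs x
    rw [← hharm x]
    rcases cosetIdx_mul_gen_eq_add_sub hρi hρj hρs x with ⟨hi, hj⟩ | ⟨hi, hj⟩
    · rw [pLap_comp_cosetIdx hr_symm hrϱ hij hi hj hfix]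
    · rw [pLap_comp_cosetIdx hr_symm hrϱ hij.symm hj hi fun s hsj hsi => hfix s hsi hsj]
  have hmono := monotone_or_antitone_of_odd_flux_balance (phiP_strictMono hp1).injective
    (phiP_neg p) hϱ_pos hbal
  exact hmono.imp (fun hg n => hg (Int.le_add_one le_rfl)) fun hg n => hg (Int.le_add_one le_rfl)

theorem stmt11 (k : ℕ) (hk : 1 ≤ k) (p : ℝ) (hp1 : 1 < p)
    (r : G k × G k → ℝ) (hr_symm : ∀ x y : G k, r (x, y) = r (y, x)) (hr_pos : ∀ x y : G k, 0 < r (x, y))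
    (i j : Fin (k + 1)) (hij : i ≠ j)
    (ρ : G k →* Equiv.Perm ℤ)
    (hρi : ∀ n : ℤ, ρ (gen k i) n = 1 - n)
    (hρj : ∀ n : ℤ, ρ (gen k j) n = -1 - n)
    (hρs : ∀ s : Fin (k + 1), s ≠ i → s ≠ j → ρ (gen k s) = 1)
    (ϱ : ℤ → ℝ) (hϱ_pos : ∀ n : ℤ, 0 < ϱ n)
    (hrϱ : ∀ x y : G k, cosetIdx ρ y = cosetIdx ρ x + 1 → r (x, y) = ϱ (cosetIdx ρ x))
    (g : ℤ → ℝ) (hharm : ∀ x : G k, pLap k p r (fun x => g (cosetIdx ρ x)) x = 0) :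
    (∀ n : ℤ, g n ≤ g (n + 1)) ∨ (∀ n : ℤ, g (n + 1) ≤ g n) :=
  stmt11_general k p hp1 r hr_symm i j hij ρ hρi hρj hρs ϱ hϱ_pos hrϱ g hharm
end
end
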